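/- Let d ∈ ℕ, ε > 0, 0 < T < ∞, and let w : [0,T] → ℝ^d be continuously differentiable with w(0) = 0. Then ∫_0^T e^{-t/ε} |w(t)|² dt ≤ 4 ε² ∫_0^T e^{-t/ε} |w'(t)|² dt. -/

import Mathlib

/-!
With the weight `e(t) = exp (-t/ε)`, the derivative of `e ‖w‖²` is `e (2⟪w, w'⟫ - ‖w‖²/ε)`;
its integral over `[0, T]` is `e(T) ‖w T‖² ≥ 0` because `w 0 = 0`. Young's inequality
`2⟪w, w'⟫ ≤ ‖w‖²/(2ε) + 2ε ‖w'‖²` bounds the integrand by `e (2ε ‖w'‖² - ‖w‖²/(2ε))`, so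
`∫ e ‖w‖² / (2ε) ≤ 2ε ∫ e ‖w'‖²`.
-/

open Real Set intervalIntegral

open scoped RealInnerProductSpace

section

variable {E : Type*} [NormedAddCommGroup E] [InnerProductSpace ℝ E]

theorem two_mul_inner_le_div_add_mul_sq (x y : E) {c : ℝ} (hc : 0 < c) :
    2 * ⟪x, y⟫ ≤ ‖x‖ ^ 2 / c + c * ‖y‖ ^ 2 := by
  rw [div_add' _ _ _ hc.ne', le_div_iff₀ hc]
  nlinarith [real_inner_le_norm x y, sq_nonneg (‖x‖ - c * ‖y‖)]

theorem mul_two_inner_sub_div_le {r ε : ℝ} (hr : 0 ≤ r) (hε : 0 < ε) (x y : E) :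
    r * (2 * ⟪x, y⟫ - ‖x‖ ^ 2 / ε) ≤ 2 * ε * (r * ‖y‖ ^ 2) - r * ‖x‖ ^ 2 / (2 * ε) := by
  have hhalf : ‖x‖ ^ 2 / ε = 2 * (‖x‖ ^ 2 / (2 * ε)) := by field_simp
  have hyoung := two_mul_inner_le_div_add_mul_sq x y (by positivity : 0 < 2 * ε)
  calc _ ≤ r * (2 * ε * ‖y‖ ^ 2 - ‖x‖ ^ 2 / (2 * ε)) :=
        mul_le_mul_of_nonneg_left (by linarith) hr
    _ = _ := by ring

theorem HasDerivWithinAt.exp_neg_div_mul_norm_sq {w : ℝ → E} {w' : E} {s : Set ℝ} {t : ℝ}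
    (ε : ℝ) (hw : HasDerivWithinAt w w' s t) :
    HasDerivWithinAt (fun t => Real.exp (-t / ε) * ‖w t‖ ^ 2)
      (Real.exp (-t / ε) * (2 * ⟪w t, w'⟫ - ‖w t‖ ^ 2 / ε)) s t := by
  have hexp : HasDerivWithinAt (fun t : ℝ => Real.exp (-t / ε))
      (Real.exp (-t / ε) * (-1 / ε)) s t :=
    ((hasDerivAt_id t).neg.div_const ε).exp.hasDerivWithinAt
  refine (hexp.mul hw.norm_sq).congr_deriv ?_
  ring

theorem integral_exp_neg_div_mul_deriv_norm_sq [CompleteSpace E] {w w' : ℝ → E} {a b : ℝ}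
    (ε : ℝ) (hab : a ≤ b)
    (hw : ∀ t ∈ Icc a b, HasDerivWithinAt w (w' t) (Icc a b) t)
    (hw' : ContinuousOn w' (Icc a b)) :
    ∫ t in a..b, exp (-t / ε) * (2 * ⟪w t, w' t⟫ - ‖w t‖ ^ 2 / ε)
      = exp (-b / ε) * ‖w b‖ ^ 2 - exp (-a / ε) * ‖w a‖ ^ 2 := by
  have hwc : ContinuousOn w (Icc a b) := fun t ht => (hw t ht).continuousWithinAt
  refine integral_eq_sub_of_hasDerivAt_of_le (f := fun t => exp (-t / ε) * ‖w t‖ ^ 2) hab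
    (by fun_prop) (fun t ht => ?_) (ContinuousOn.intervalIntegrable_of_Icc hab (by fun_prop))
  exact ((hw t (Ioo_subset_Icc_self ht)).exp_neg_div_mul_norm_sq ε).hasDerivAt
    (Icc_mem_nhds ht.1 ht.2)

end

theorem wide_weighted_poincare_finite_horizon (d : ℕ) (ε T : ℝ) (hε : 0 < ε) (hT : 0 < T)
    (w w' : ℝ → EuclideanSpace ℝ (Fin d))
    (hderiv : ∀ t ∈ Set.Icc (0 : ℝ) T, HasDerivWithinAt w (w' t) (Set.Icc 0 T) t)
    (hcont : ContinuousOn w' (Set.Icc 0 T))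
    (hw0 : w 0 = 0) :
    (∫ t in (0 : ℝ)..T, Real.exp (-t / ε) * ‖w t‖ ^ 2)
      ≤ 4 * ε ^ 2 * ∫ t in (0 : ℝ)..T, Real.exp (-t / ε) * ‖w' t‖ ^ 2 := by
  have hwc : ContinuousOn w (Icc 0 T) := fun t ht => (hderiv t ht).continuousWithinAt
  have hF : IntervalIntegrable (fun t => exp (-t / ε) * ‖w t‖ ^ 2) MeasureTheory.volume 0 T :=
    ContinuousOn.intervalIntegrable_of_Icc hT.le (by fun_prop)
  have hG : IntervalIntegrable (fun t => exp (-t / ε) * ‖w' t‖ ^ 2) MeasureTheory.volume 0 T :=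
    ContinuousOn.intervalIntegrable_of_Icc hT.le (by fun_prop)
  have hD : IntervalIntegrable
      (fun t => exp (-t / ε) * (2 * ⟪w t, w' t⟫ - ‖w t‖ ^ 2 / ε)) MeasureTheory.volume 0 T :=
    ContinuousOn.intervalIntegrable_of_Icc hT.le (by fun_prop)
  have hnonneg : 0 ≤ ∫ t in (0 : ℝ)..T, exp (-t / ε) * (2 * ⟪w t, w' t⟫ - ‖w t‖ ^ 2 / ε) := by
    rw [integral_exp_neg_div_mul_deriv_norm_sq ε hT.le hderiv hcont, hw0, norm_zero,
      zero_pow two_ne_zero, mul_zero, sub_zero]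
    positivity
  have hyoung : ∫ t in (0 : ℝ)..T, exp (-t / ε) * (2 * ⟪w t, w' t⟫ - ‖w t‖ ^ 2 / ε)
      ≤ ∫ t in (0 : ℝ)..T,
        (2 * ε * (exp (-t / ε) * ‖w' t‖ ^ 2) - exp (-t / ε) * ‖w t‖ ^ 2 / (2 * ε)) :=
    integral_mono_on hT.le hD ((hG.const_mul _).sub (hF.div_const _)) fun t _ =>
      mul_two_inner_sub_div_le (exp_pos _).le hε (w t) (w' t)
  rw [integral_sub (hG.const_mul _) (hF.div_const _), integral_const_mul, integral_div]
    at hyoung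
  calc (∫ t in (0 : ℝ)..T, exp (-t / ε) * ‖w t‖ ^ 2)
      = 2 * ε * ((∫ t in (0 : ℝ)..T, exp (-t / ε) * ‖w t‖ ^ 2) / (2 * ε)) := by field_simp
    _ ≤ 2 * ε * (2 * ε * ∫ t in (0 : ℝ)..T, exp (-t / ε) * ‖w' t‖ ^ 2) := by
        gcongr
        linarith
    _ = 4 * ε ^ 2 * ∫ t in (0 : ℝ)..T, exp (-t / ε) * ‖w' t‖ ^ 2 := by ring
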